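/- arXiv:1302.1104 — 2 statements merged into one kernel-verified Lean document; each statement's English description precedes it below -/
import Mathlib

section
/- Let R = ℂ[U₁,V₁,V₂,W₁,W₂] and let M ⊆ R² be the R-submodule generated by the vectors (W₂,0), (V₁,0), (−2V₂+3W₁, 2U₁), (V₁, 3W₁), (W₂, V₁), (0, W₂), (V₂+W₁, 0), (0, V₂+W₁), (U₁, 0), (0, U₁). Then M contains m·R², where m = (U₁,V₁,V₂,W₁,W₂) is the irrelevant maximal ideal; equivalently M + ℂ·(1,0) + ℂ·(0,1) = R² and R²/M has ℂ-dimension 2. -/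
open MvPolynomial

/-- `R = ℂ[U₁,V₁,V₂,W₁,W₂]`, with `U₁ = X 0`, `V₁ = X 1`, `V₂ = X 2`, `W₁ = X 3`, `W₂ = X 4`. -/
noncomputable abbrev R5 : Type := MvPolynomial (Fin 5) ℂ

/-- The ten generators of the tangent-space module of Example 5.1. -/
noncomputable def gens5 : Set (R5 × R5) :=
  {(X 4, 0), (X 1, 0), (-2 * X 2 + 3 * X 3, 2 * X 0), (X 1, 3 * X 3), (X 4, X 1),
    (0, X 4), (X 2 + X 3, 0), (0, X 2 + X 3), (X 0, 0), (0, X 0)}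

/-! Eliminating between the generators yields every `(xᵢ, 0)` and `(0, xᵢ)`; the only step
mixing the two components is `5·(V₂,0) = 3·(V₂+W₁,0) − (−2V₂+3W₁, 2U₁) + 2·(0,U₁)`.
As no generator has a constant term, `M = m × m`, and the constant coefficients identify
`R²/M` with `ℂ²`. -/

namespace MvPolynomial

variable {σ R : Type*} [CommRing R]

theorem mem_idealOfVars_iff {p : MvPolynomial σ R} :
    p ∈ idealOfVars σ R ↔ constantCoeff p = 0 := by
  simpa [Nat.lt_one_iff, Finsupp.degree_eq_zero_iff, constantCoeff_eq] using
    mem_pow_idealOfVars_iff' 1 p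

theorem smul_mem_of_forall_X_smul_mem {P : Type*} [AddCommGroup P]
    [Module (MvPolynomial σ R) P] {N : Submodule (MvPolynomial σ R) P} {v : P}
    (hX : ∀ i, (X i : MvPolynomial σ R) • v ∈ N) {p : MvPolynomial σ R}
    (hp : p ∈ idealOfVars σ R) : p • v ∈ N :=
  (Ideal.span_le.mpr (Set.range_subset_iff.mpr hX) :
    idealOfVars σ R ≤ N.comap (LinearMap.toSpanSingleton _ _ v)) hp

theorem prod_idealOfVars_le
    {N : Submodule (MvPolynomial σ R) (MvPolynomial σ R × MvPolynomial σ R)}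
    (hX : ∀ i, (X i, 0) ∈ N ∧ (0, X i) ∈ N) :
    Submodule.prod (idealOfVars σ R) (idealOfVars σ R) ≤ N := by
  rintro ⟨p, q⟩ ⟨hp, hq⟩
  have hpq : ((p, q) : MvPolynomial σ R × MvPolynomial σ R) = p • (1, 0) + q • (0, 1) := by
    simp
  rw [hpq]
  exact N.add_mem (smul_mem_of_forall_X_smul_mem (fun i => by simpa using (hX i).1) hp)
    (smul_mem_of_forall_X_smul_mem (fun i => by simpa using (hX i).2) hq)

theorem finrank_quotient_prod_idealOfVars (K : Type*) [Field K] :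
    Module.finrank K ((MvPolynomial σ K × MvPolynomial σ K) ⧸
      (Submodule.prod (idealOfVars σ K) (idealOfVars σ K)).restrictScalars K) = 2 := by
  let ev : MvPolynomial σ K →ₗ[K] K := (aeval (0 : σ → K)).toLinearMap
  have hev (p : MvPolynomial σ K) : ev p = constantCoeff p := aeval_zero p
  have hsurj : Function.Surjective (ev.prodMap ev) := fun ⟨a, b⟩ => ⟨(C a, C b), by simp [hev]⟩
  have hker : LinearMap.ker (ev.prodMap ev) =
      (Submodule.prod (idealOfVars σ K) (idealOfVars σ K)).restrictScalars K := by
    ext ⟨p, q⟩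
    simp [Submodule.mem_prod, mem_idealOfVars_iff, hev]
  rw [← hker, ((ev.prodMap ev).quotKerEquivOfSurjective hsurj).finrank_eq]
  simp

end MvPolynomial

open Submodule

theorem X_mem_span_gens5 (i : Fin 5) :
    ((X i, 0) : R5 × R5) ∈ span R5 gens5 ∧ ((0, X i) : R5 × R5) ∈ span R5 gens5 := by
  have hgens : gens5 ⊆ span R5 gens5 := subset_span
  set N := span R5 gens5
  simp only [gens5, Set.insert_subset_iff, Set.singleton_subset_iff, SetLike.mem_coe] at hgens
  obtain ⟨h4, h1, hmix, h13, h41, h4', h23, h23', h0, h0'⟩ := hgens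
  have cancel {c : ℂ} (hc : c ≠ 0) {v : R5 × R5} (h : c • v ∈ N) : v ∈ N :=
    (smul_mem_iff (N.restrictScalars ℂ) hc).mp h
  have h1' : ((0, X 1) : R5 × R5) ∈ N := by
    have e : ((0, X 1) : R5 × R5) = (X 4, X 1) - (X 4, 0) := by simp
    exact e ▸ sub_mem h41 h4
  have h2 : ((X 2, 0) : R5 × R5) ∈ N := by
    have e : (5 : ℂ) • ((X 2, 0) : R5 × R5) =
        3 • (X 2 + X 3, 0) - (-2 * X 2 + 3 * X 3, 2 * X 0) + 2 • (0, X 0) := by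
      ext : 1 <;> simp [ofNat_smul_eq_nsmul]; ring
    exact cancel (by norm_num) (e ▸ add_mem (sub_mem (nsmul_mem h23 3) hmix) (nsmul_mem h0' 2))
  have h3' : ((0, X 3) : R5 × R5) ∈ N := by
    have e : (3 : ℂ) • ((0, X 3) : R5 × R5) = (X 1, 3 * X 3) - (X 1, 0) := by
      ext : 1 <;> simp [ofNat_smul_eq_nsmul]
    exact cancel (by norm_num) (e ▸ sub_mem h13 h1)
  have h3 : ((X 3, 0) : R5 × R5) ∈ N := by
    have e : ((X 3, 0) : R5 × R5) = (X 2 + X 3, 0) - (X 2, 0) := by simp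
    exact e ▸ sub_mem h23 h2
  have h2' : ((0, X 2) : R5 × R5) ∈ N := by
    have e : ((0, X 2) : R5 × R5) = (0, X 2 + X 3) - (0, X 3) := by simp
    exact e ▸ sub_mem h23' h3'
  fin_cases i
  exacts [⟨h0, h0'⟩, ⟨h1, h1'⟩, ⟨h2, h2'⟩, ⟨h3, h3'⟩, ⟨h4, h4'⟩]

theorem span_gens5_eq :
    span R5 gens5 = Submodule.prod (idealOfVars (Fin 5) ℂ) (idealOfVars (Fin 5) ℂ) := by
  refine le_antisymm (span_le.mpr ?_) (prod_idealOfVars_le X_mem_span_gens5)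
  simp [gens5, Set.insert_subset_iff, mem_idealOfVars_iff]

/-- The submodule `M ⊆ R²` generated by the ten listed vectors contains `m·R²`
(where `m = (U₁,V₁,V₂,W₁,W₂)`); equivalently `M + ℂ(1,0) + ℂ(0,1) = R²` and `R²/M` has
`ℂ`-dimension `2`. -/
theorem tangent_module_contains_max_ideal :
    (∀ i : Fin 5, ((X i, 0) : R5 × R5) ∈ Submodule.span R5 gens5 ∧
      ((0, X i) : R5 × R5) ∈ Submodule.span R5 gens5) ∧
    (∀ f : R5 × R5, ∃ a b : ℂ, f - (C a, C b) ∈ Submodule.span R5 gens5) ∧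
    Module.finrank ℂ ((R5 × R5) ⧸ (Submodule.span R5 gens5).restrictScalars ℂ) = 2 := by
  refine ⟨X_mem_span_gens5, fun f => ⟨constantCoeff f.1, constantCoeff f.2, ?_⟩, ?_⟩
  · rw [span_gens5_eq]
    simp [mem_prod, mem_idealOfVars_iff]
  · rw [span_gens5_eq]
    exact finrank_quotient_prod_idealOfVars ℂ
end

section
/- In the module M of the previous context (submodule of ℂ[U₁,V₁,V₂,W₁,W₂]² generated by the ten listed vectors), the vector (0, V₁) lies in M, but (0, V₁) does not lie in the submodule M' generated by the eight vectors obtained by omitting (W₂, V₁) and (0, W₂). -/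
open MvPolynomial

/-- The eight generators obtained by omitting `(W₂, V₁)` and `(0, W₂)`
(the contributions of the third family of liftable vector fields). -/
noncomputable def gens5' : Set (R5 × R5) :=
  {(X 4, 0), (X 1, 0), (-2 * X 2 + 3 * X 3, 2 * X 0), (X 1, 3 * X 3),
    (X 2 + X 3, 0), (0, X 2 + X 3), (X 0, 0), (0, X 0)}

/-- The substitution killing all variables except `V₁`. -/
noncomputable def sub5 : R5 →ₐ[ℂ] R5 :=
  aeval (fun i => if i = 1 then X 1 else 0)

/-- `(0, V₁)` lies in the module generated by all ten vectors, but not in the module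
generated by the eight vectors omitting the third-family contributions. -/
theorem third_family_required :
    ((0, X 1) : R5 × R5) ∈ Submodule.span R5 gens5 ∧
    ((0, X 1) : R5 × R5) ∉ Submodule.span R5 gens5' := by
  constructor
  · have h : ((0, X 1) : R5 × R5) = (X 4, X 1) - (X 4, 0) := by
      simp [Prod.ext_iff]
    rw [h]
    exact sub_mem (Submodule.subset_span (by simp [gens5]))
      (Submodule.subset_span (by simp [gens5]))
  · intro hmem
    have key : ∀ x ∈ Submodule.span R5 gens5', sub5 x.2 = 0 := by
      intro x hx
      induction hx using Submodule.span_induction with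
      | mem x hx =>
        simp only [gens5', Set.mem_insert_iff, Set.mem_singleton_iff] at hx
        rcases hx with h | h | h | h | h | h | h | h <;> subst h <;>
          simp [sub5]
      | zero => simp
      | add x y _ _ hx hy => simp [hx, hy]
      | smul r x _ hx =>
        have : (r • x).2 = r * x.2 := rfl
        rw [this, map_mul, hx, mul_zero]
    have h1 := key _ hmem
    simp [sub5] at h1
end
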